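/- arXiv:2202.00590 — 6 statements merged into one kernel-verified Lean document; each statement's English description precedes it below -/
import Mathlib

section
/- Let A = {0, a_2, ..., a_n} with 0 < a_2 < ... < a_n, n ≥ 2, and gcd(a_2, ..., a_n) = 1. If |sA| = s(n-1) + 1 for some s ≥ 2, then A = {0, 1, ..., n-1}. -/
open Finset Pointwise

/-- The s-fold iterated sumset of a finite set of natural numbers; `sumset A 0 = {0}`. -/
def sumset (A : Finset ℕ) : ℕ → Finset ℕ
  | 0 => {0}
  | s + 1 => A + sumset A s

/-!
By Cauchy–Davenport each further summand adds at least `|A| - 1` new elements, so the extremal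
size of `sA` forces `|A + A| = 2|A| - 1`. With `0, m = max A ∈ A` the set `A ∪ (A + m)` already
has that many elements, hence equals `A + A`. If `d` is the least positive element of `A`, then
for `a < m` the sum `a + d` cannot exceed `m` inside `A + m`, so `a + d ∈ A`. Walking up from any
`a` in steps of `d` reaches `m`, so `d` divides every element, i.e. `d = 1`, and walking up from `0`
fills the whole interval `[0, m]`.
-/

namespace sumset

lemma two (A : Finset ℕ) : sumset A 2 = A + A := by
  simp [sumset, add_singleton]

lemma nonempty {A : Finset ℕ} (hA : A.Nonempty) : ∀ s, (sumset A s).Nonempty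
  | 0 => singleton_nonempty 0
  | s + 1 => hA.add (nonempty hA s)

lemma card_add_mul_le_card {A : Finset ℕ} (hA : A.Nonempty) (s k : ℕ) :
    #(sumset A s) + k * (#A - 1) ≤ #(sumset A (s + k)) := by
  induction k with
  | zero => simp
  | succ k ih =>
    have hCD := cauchy_davenport_add_of_linearOrder_isCancelAdd hA (nonempty hA (s + k))
    have : #(sumset A (s + k)) + (#A - 1) ≤ #(sumset A (s + (k + 1))) := by
      have := hA.card_pos
      change _ ≤ #(A + sumset A (s + k))
      omega
    rw [add_mul, one_mul, ← add_assoc]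
    omega

lemma card_add_self_le_of_card_eq {A : Finset ℕ} (hA : A.Nonempty) {s : ℕ} (hs : 2 ≤ s)
    (h : #(sumset A s) = s * (#A - 1) + 1) : #(A + A) ≤ 2 * (#A - 1) + 1 := by
  obtain ⟨k, rfl⟩ := Nat.exists_eq_add_of_le hs
  have := card_add_mul_le_card hA 2 k
  rw [two, h, add_mul] at this
  omega

end sumset

lemma add_self_eq_union_of_card_le {A : Finset ℕ} {m : ℕ} (h0 : 0 ∈ A) (hm : m ∈ A)
    (hmax : ∀ a ∈ A, a ≤ m) (hcard : #(A + A) ≤ 2 * (#A - 1) + 1) :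
    A + A = A ∪ A.image (· + m) := by
  have hsub : A ∪ A.image (· + m) ⊆ A + A := by
    refine union_subset (fun a ha => ?_) (image_subset_iff.2 fun a ha => add_mem_add ha hm)
    simpa using add_mem_add h0 ha
  have hinter : #(A ∩ A.image (· + m)) ≤ 1 := by
    refine card_le_one.2 fun x hx y hy => ?_
    simp only [mem_inter, mem_image] at hx hy
    obtain ⟨hxA, b, -, rfl⟩ := hx
    obtain ⟨hyA, c, -, rfl⟩ := hy
    have := hmax _ hxA
    have := hmax _ hyA
    omega
  refine (eq_of_subset_of_card_le hsub ?_).symm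
  have := card_union_add_card_inter A (A.image (· + m))
  rw [card_image_of_injective _ (add_left_injective m)] at this
  have := card_pos.2 ⟨0, h0⟩
  omega

lemma add_mem_of_add_self_eq_union {A : Finset ℕ} {m d : ℕ} (hAA : A + A = A ∪ A.image (· + m))
    (hm : m ∈ A) (hd : d ∈ A) (hdmin : ∀ a ∈ A, 0 < a → d ≤ a) {a : ℕ} (ha : a ∈ A)
    (ham : a < m) : a + d ∈ A := by
  have : a + d ∈ A + A := add_mem_add ha hd
  rw [hAA, mem_union, mem_image] at this
  obtain h | ⟨c, hc, hcad⟩ := this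
  · exact h
  · obtain rfl | hcpos := Nat.eq_zero_or_pos c
    · rwa [← hcad, zero_add]
    · have := hdmin c hc hcpos
      omega

lemma modEq_of_add_mem {A : Set ℕ} {m d : ℕ} (hd : 0 < d) (hmax : ∀ a ∈ A, a ≤ m)
    (hstep : ∀ a ∈ A, a < m → a + d ∈ A) {a : ℕ} (ha : a ∈ A) : a ≡ m [MOD d] := by
  induction h : m - a using Nat.strong_induction_on generalizing a with
  | _ k ih =>
    obtain ham | rfl := (hmax a ha).lt_or_eq
    · have had := hstep a ha ham
      have := hmax _ had
      exact Nat.add_modEq_right.symm.trans (ih _ (by omega) had rfl)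
    · rfl

lemma eq_range_card_of_add_one_mem {A : Finset ℕ} {m : ℕ} (h0 : 0 ∈ A) (hmax : ∀ a ∈ A, a ≤ m)
    (hstep : ∀ a ∈ A, a < m → a + 1 ∈ A) : A = range #A := by
  have hle : ∀ k ≤ m, k ∈ A := by
    intro k hk
    induction k with
    | zero => exact h0
    | succ k ih => exact hstep k (ih (by omega)) (by omega)
  have hA : A = range (m + 1) := by
    ext x
    rw [mem_range]
    exact ⟨fun hx => Nat.lt_succ_of_le (hmax x hx), fun hx => hle x (Nat.le_of_lt_succ hx)⟩
  rw [hA, card_range]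

theorem stmt3 (A : Finset ℕ) (h0 : 0 ∈ A) (hn : 2 ≤ A.card) (hgcd : A.gcd id = 1)
    (s : ℕ) (hs : 2 ≤ s) (h : (sumset A s).card = s * (A.card - 1) + 1) :
    A = Finset.range A.card := by
  obtain ⟨m, hm, hmax⟩ := A.exists_max_image id ⟨0, h0⟩
  have hpos : (A.filter (0 < ·)).Nonempty := by
    obtain ⟨a, ha, ha0⟩ := exists_mem_ne hn 0
    exact ⟨a, mem_filter.2 ⟨ha, Nat.pos_of_ne_zero ha0⟩⟩
  obtain ⟨d, hd, hdmin⟩ := (A.filter (0 < ·)).exists_min_image id hpos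
  rw [mem_filter] at hd
  have hAA := add_self_eq_union_of_card_le h0 hm hmax
    (sumset.card_add_self_le_of_card_eq ⟨0, h0⟩ hs h)
  have hstep : ∀ a ∈ A, a < m → a + d ∈ A := fun a ha ham =>
    add_mem_of_add_self_eq_union hAA hm hd.1
      (fun b hb hbpos => hdmin b (mem_filter.2 ⟨hb, hbpos⟩)) ha ham
  have hdvd : ∀ a ∈ A, d ∣ a := fun a ha => Nat.modEq_zero_iff_dvd.1
    ((modEq_of_add_mem (A := ↑A) hd.2 hmax hstep ha).trans
      (modEq_of_add_mem hd.2 hmax hstep h0).symm)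
  have hd1 : d = 1 := Nat.dvd_one.1 (hgcd ▸ dvd_gcd hdvd)
  exact eq_range_card_of_add_one_mem h0 hmax (hd1 ▸ hstep)
end

section
/- Let A = {0, a_2, ..., a_n} with 0 < a_2 < ... < a_n, n ≥ 2, and gcd(a_2, ..., a_n) = 1. Then the following are equivalent: (i) |sA| = s(n-1) + 1 for all sufficiently large s; (ii) |sA| = s(n-1) + 1 for some s ≥ 2; (iii) A = {0, 1, ..., n-1}; (iv) |sA| = s(n-1) + 1 for all s ≥ 0. -/
open Finset Pointwise

/-!
By Cauchy–Davenport in `ℕ`, each further summand adds at least `|A| - 1` elements, so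
`|sA| ≥ s(|A| - 1) + 1` always, and equality for one `s ≥ 2` forces `|A + A| = 2|A| - 1`.
In that case `A + A` is exactly `A ∪ (m + A)`, `m = max A`. Hence for the least positive element
`b` of `A`, every `x ∈ A` below `m` has `x + b ∈ A`; walking up from `x` to `m` in steps of `b`
shows `b ∣ x`, so `b = 1` by the gcd condition and `A = {0, …, m}`.
-/

lemma sumset_succ (A : Finset ℕ) (s : ℕ) : sumset A (s + 1) = A + sumset A s := rfl

lemma sumset_two (A : Finset ℕ) : sumset A 2 = A + A := by
  simp [sumset, add_singleton]

section Sumset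

variable {A : Finset ℕ}

lemma sumset_nonempty (hA : A.Nonempty) : ∀ s, (sumset A s).Nonempty
  | 0 => singleton_nonempty 0
  | s + 1 => hA.add (sumset_nonempty hA s)

lemma card_sumset_add_mul_le (hA : A.Nonempty) (k : ℕ) :
    ∀ t, (sumset A k).card + t * (A.card - 1) ≤ (sumset A (k + t)).card
  | 0 => by simp
  | t + 1 => by
    have ih := card_sumset_add_mul_le hA k t
    have hcd := cauchy_davenport_add_of_linearOrder_isCancelAdd hA (sumset_nonempty hA (k + t))
    have hcard := hA.card_pos
    rw [← add_assoc, sumset_succ, add_one_mul]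
    omega

lemma card_add_self_of_card_sumset_eq (hA : A.Nonempty) {s : ℕ} (hs : 2 ≤ s)
    (h : (sumset A s).card = s * (A.card - 1) + 1) : (A + A).card = 2 * A.card - 1 := by
  have hlower := card_sumset_add_mul_le hA 0 2
  have hupper := card_sumset_add_mul_le hA 2 (s - 2)
  rw [zero_add, sumset_two] at hlower
  rw [Nat.add_sub_cancel' hs, h, sumset_two] at hupper
  have hsplit : s * (A.card - 1) = (s - 2) * (A.card - 1) + 2 * (A.card - 1) := by
    rw [← add_mul, Nat.sub_add_cancel hs]
  have hcard := hA.card_pos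
  simp only [sumset, card_singleton] at hlower
  omega

lemma range_add_range {a b : ℕ} (ha : 0 < a) (hb : 0 < b) :
    range a + range b = range (a + b - 1) := by
  ext x
  simp only [mem_add, mem_range]
  constructor
  · rintro ⟨y, hy, z, hz, rfl⟩
    omega
  · intro hx
    exact ⟨min x (a - 1), by omega, x - min x (a - 1), by omega, by omega⟩

lemma sumset_range {n : ℕ} (hn : 0 < n) : ∀ s, sumset (range n) s = range (s * (n - 1) + 1)
  | 0 => by simp [sumset]
  | s + 1 => by
    rw [sumset_succ, sumset_range hn s, range_add_range hn (Nat.succ_pos _), add_one_mul]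
    congr 1
    omega

end Sumset

section EqualityCase

variable {A : Finset ℕ} {m b : ℕ}

lemma card_union_image_add_max (h0 : 0 ∈ A) (hm : IsGreatest (A : Set ℕ) m) :
    (A ∪ A.image (m + ·)).card = 2 * A.card - 1 := by
  have hinter : A ∩ A.image (m + ·) = {m} := by
    ext x
    simp only [mem_inter, mem_image, mem_singleton]
    constructor
    · rintro ⟨hxA, a, -, rfl⟩
      have := hm.2 hxA
      omega
    · rintro rfl
      exact ⟨hm.1, 0, h0, add_zero _⟩
  have hunion := card_union_add_card_inter A (A.image (m + ·))
  rw [hinter, card_image_of_injective _ (add_right_injective m), card_singleton] at hunion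
  omega

lemma add_self_eq_union_image_add_max (h0 : 0 ∈ A) (hm : IsGreatest (A : Set ℕ) m)
    (h2 : (A + A).card = 2 * A.card - 1) : A + A = A ∪ A.image (m + ·) := by
  refine (eq_of_subset_of_card_le ?_ ?_).symm
  · refine union_subset (fun x hx => mem_add.2 ⟨x, hx, 0, h0, add_zero x⟩) ?_
    intro y hy
    obtain ⟨a, ha, rfl⟩ := mem_image.1 hy
    exact mem_add.2 ⟨m, hm.1, a, ha, rfl⟩
  · rw [h2, card_union_image_add_max h0 hm]

/-- If `x + b = m + a` with `x < m`, then `a < b`, so `a = 0` by minimality of `b`. -/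
lemma add_mem_of_card_add_self (h0 : 0 ∈ A) (hm : IsGreatest (A : Set ℕ) m)
    (h2 : (A + A).card = 2 * A.card - 1) (hb : b ∈ A) (hbmin : ∀ a ∈ A, a ≠ 0 → b ≤ a)
    {x : ℕ} (hx : x ∈ A) (hxm : x ≠ m) : x + b ∈ A := by
  have hsum : x + b ∈ A + A := add_mem_add hx hb
  rw [add_self_eq_union_image_add_max h0 hm h2, mem_union, mem_image] at hsum
  obtain hsum | ⟨a, ha, hxb⟩ := hsum
  · exact hsum
  · have hxlt : x < m := lt_of_le_of_ne (hm.2 hx) hxm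
    obtain rfl : a = 0 := by
      by_contra ha0
      have := hbmin a ha ha0
      omega
    rw [← hxb, add_zero]
    exact hm.1

lemma dvd_sub_of_add_mem (hm : IsGreatest (A : Set ℕ) m) (hb : 0 < b)
    (hstep : ∀ x ∈ A, x ≠ m → x + b ∈ A) {x : ℕ} (hx : x ∈ A) : b ∣ m - x := by
  induction hk : m - x using Nat.strong_induction_on generalizing x with
  | _ k ih =>
    subst hk
    rcases eq_or_ne x m with rfl | hxm
    · simp
    · have hxb := hstep x hx hxm
      have hle := hm.2 hxb
      obtain ⟨c, hc⟩ := ih (m - (x + b)) (by omega) hxb rfl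
      exact ⟨c + 1, by rw [mul_add_one]; omega⟩

lemma dvd_of_add_mem (h0 : 0 ∈ A) (hm : IsGreatest (A : Set ℕ) m) (hb : 0 < b)
    (hstep : ∀ x ∈ A, x ≠ m → x + b ∈ A) {x : ℕ} (hx : x ∈ A) : b ∣ x := by
  have hdm : b ∣ m := by simpa using dvd_sub_of_add_mem hm hb hstep h0
  have hdx := Nat.dvd_sub hdm (dvd_sub_of_add_mem hm hb hstep hx)
  rwa [Nat.sub_sub_self (hm.2 hx)] at hdx

lemma range_subset_of_add_one_mem (h0 : 0 ∈ A) (hstep : ∀ x ∈ A, x ≠ m → x + 1 ∈ A) :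
    range (m + 1) ⊆ A := by
  intro x hx
  induction x with
  | zero => exact h0
  | succ y ih =>
    rw [mem_range] at hx
    exact hstep y (ih (mem_range.2 (by omega))) (by omega)

theorem eq_range_card_of_card_add_self (h0 : 0 ∈ A) (hgcd : A.gcd id = 1)
    (h2 : (A + A).card = 2 * A.card - 1) : A = range A.card := by
  set m := A.max' ⟨0, h0⟩
  have hm : IsGreatest (A : Set ℕ) m := isGreatest_max' A _
  have hpos : (A.erase 0).Nonempty := by
    refine ⟨m, mem_erase.2 ⟨fun hm0 => ?_, hm.1⟩⟩
    have hA : A = {0} := eq_singleton_iff_unique_mem.2 ⟨h0, fun x hx => by simpa [hm0] using hm.2 hx⟩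
    simp [hA] at hgcd
  set b := (A.erase 0).min' hpos
  have hbA : b ∈ A := mem_of_mem_erase (min'_mem _ hpos)
  have hb0 : b ≠ 0 := ne_of_mem_erase (min'_mem _ hpos)
  have hbmin : ∀ a ∈ A, a ≠ 0 → b ≤ a := fun a ha ha0 => min'_le _ _ (mem_erase.2 ⟨ha0, ha⟩)
  have hstep : ∀ x ∈ A, x ≠ m → x + b ∈ A := fun x hx hxm =>
    add_mem_of_card_add_self h0 hm h2 hbA hbmin hx hxm
  have hb1 : b = 1 := by
    rw [← Nat.dvd_one, ← hgcd]
    exact Finset.dvd_gcd fun x hx => dvd_of_add_mem h0 hm (Nat.pos_of_ne_zero hb0) hstep hx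
  rw [hb1] at hstep
  have hrange : A = range (m + 1) :=
    Subset.antisymm (fun x hx => mem_range.2 (Nat.lt_succ_of_le (hm.2 hx)))
      (range_subset_of_add_one_mem h0 hstep)
  rw [hrange, card_range]

end EqualityCase

theorem stmt4_general (A : Finset ℕ) (h0 : 0 ∈ A) (hgcd : A.gcd id = 1) :
    List.TFAE [
      (∃ s0 : ℕ, ∀ s ≥ s0, (sumset A s).card = s * (A.card - 1) + 1),
      (∃ s : ℕ, 2 ≤ s ∧ (sumset A s).card = s * (A.card - 1) + 1),
      A = Finset.range A.card,
      (∀ s : ℕ, (sumset A s).card = s * (A.card - 1) + 1)] := by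
  have hA : A.Nonempty := ⟨0, h0⟩
  tfae_have 1 → 2 := fun ⟨s0, h⟩ => ⟨max s0 2, le_max_right _ _, h _ (le_max_left _ _)⟩
  tfae_have 2 → 3 := fun ⟨s, hs, h⟩ =>
    eq_range_card_of_card_add_self h0 hgcd (card_add_self_of_card_sumset_eq hA hs h)
  tfae_have 3 → 4 := fun h s => by
    rw [h, card_range, sumset_range hA.card_pos, card_range]
  tfae_have 4 → 1 := fun h => ⟨0, fun s _ => h s⟩
  tfae_finish

theorem stmt4 (A : Finset ℕ) (h0 : 0 ∈ A) (hn : 2 ≤ A.card) (hgcd : A.gcd id = 1) :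
    List.TFAE [
      (∃ s0 : ℕ, ∀ s ≥ s0, (sumset A s).card = s * (A.card - 1) + 1),
      (∃ s : ℕ, 2 ≤ s ∧ (sumset A s).card = s * (A.card - 1) + 1),
      A = Finset.range A.card,
      (∀ s : ℕ, (sumset A s).card = s * (A.card - 1) + 1)] :=
  stmt4_general A h0 hgcd
end

section
/- Let A be a finite set of non-negative integers with |A| = n ≥ 2. Then |sA| = s(n-1) + 1 for all s ≥ 0 if and only if A is an n-term arithmetic progression, i.e. A = {q_0 + q_1·k : 0 ≤ k ≤ n-1} for some q_0 ≥ 0 and q_1 ≥ 1. -/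
open Finset Pointwise

lemma sumset_one' (A : Finset ℕ) : sumset A 1 = A := by
  simp [sumset, Finset.add_singleton]

lemma ap_sumset (q0 q1 n : ℕ) (hq : 1 ≤ q1) (hn : 1 ≤ n) (s : ℕ) :
    sumset ((Finset.range n).image fun k => q0 + q1 * k) s
      = (Finset.range (s*(n-1)+1)).image (fun k => s*q0 + q1*k) := by
  induction s with
  | zero => simp [sumset]
  | succ s ih =>
    rw [show sumset ((Finset.range n).image fun k => q0 + q1 * k) (s+1)
        = (Finset.range n).image (fun k => q0 + q1 * k) + sumset ((Finset.range n).image fun k => q0 + q1 * k) s from rfl, ih]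
    ext x
    simp only [Finset.mem_add, Finset.mem_image, Finset.mem_range]
    constructor
    · rintro ⟨y, ⟨i, hi, rfl⟩, z, ⟨j, hj, rfl⟩, rfl⟩
      refine ⟨i + j, ?_, by ring⟩
      have h1 : (s+1)*(n-1) = s*(n-1) + (n-1) := by ring
      omega
    · rintro ⟨k, hk, rfl⟩
      have h1 : (s+1)*(n-1) = s*(n-1) + (n-1) := by ring
      refine ⟨q0 + q1 * (min k (n-1)), ⟨min k (n-1), by omega, rfl⟩,
        s*q0 + q1 * (k - min k (n-1)), ⟨k - min k (n-1), by omega, rfl⟩, ?_⟩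
      have h2 : min k (n-1) + (k - min k (n-1)) = k := by omega
      calc q0 + q1 * min k (n-1) + (s*q0 + q1 * (k - min k (n-1)))
          = (s+1)*q0 + q1 * (min k (n-1) + (k - min k (n-1))) := by ring
        _ = (s+1)*q0 + q1 * k := by rw [h2]

lemma forward_ap (A : Finset ℕ) (n : ℕ) (hn : 2 ≤ n) (hcard : A.card = n)
    (h2 : (A + A).card = 2 * n - 1) :
    ∃ q0 q1 : ℕ, 1 ≤ q1 ∧ A = (Finset.range n).image (fun k => q0 + q1 * k) := by
  have hA : A.Nonempty := by
    rw [← Finset.card_pos, hcard]; omega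
  set p := A.min' hA with hp_def
  set M := A.max' hA with hM_def
  have hp : p ∈ A := A.min'_mem hA
  have hM : M ∈ A := A.max'_mem hA
  have hple : ∀ a ∈ A, p ≤ a := fun a ha => A.min'_le a ha
  have hleM : ∀ a ∈ A, a ≤ M := fun a ha => A.le_max' a ha
  -- the union
  set U : Finset ℕ := A.image (p + ·) ∪ A.image (M + ·) with hU_def
  have hUsub : U ⊆ A + A := by
    intro x hx
    rw [hU_def, Finset.mem_union] at hx
    rcases hx with hx | hx <;> rw [Finset.mem_image] at hx <;>
      obtain ⟨a, ha, rfl⟩ := hx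
    · exact Finset.add_mem_add hp ha
    · exact Finset.add_mem_add hM ha
  have hinter : A.image (p + ·) ∩ A.image (M + ·) = {p + M} := by
    ext x
    simp only [Finset.mem_inter, Finset.mem_image, Finset.mem_singleton]
    constructor
    · rintro ⟨⟨a, ha, rfl⟩, ⟨b, hb, hba⟩⟩
      have := hleM a ha
      have := hple b hb
      omega
    · rintro rfl
      exact ⟨⟨M, hM, rfl⟩, ⟨p, hp, by ring⟩⟩
  have hinj1 : (A.image (p + ·)).card = n := by
    rw [Finset.card_image_of_injective _ (add_right_injective p), hcard]
  have hinj2 : (A.image (M + ·)).card = n := by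
    rw [Finset.card_image_of_injective _ (add_right_injective M), hcard]
  have hUcard : U.card = 2 * n - 1 := by
    have h5 := Finset.card_union_add_card_inter (A.image (p + ·)) (A.image (M + ·))
    rw [hinter] at h5
    simp only [Finset.card_singleton] at h5
    rw [hinj1, hinj2] at h5
    rw [hU_def]
    omega
  have hUeq : A + A = U := by
    refine (Finset.eq_of_subset_of_card_le hUsub ?_).symm
    rw [h2, hUcard]
  -- closure lemmas
  have hmemU : ∀ a ∈ A, ∀ b ∈ A, (∃ c ∈ A, a + b = p + c) ∨ (∃ c ∈ A, a + b = M + c) := by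
    intro a ha b hb
    have : a + b ∈ U := by rw [← hUeq]; exact Finset.add_mem_add ha hb
    rw [hU_def, Finset.mem_union, Finset.mem_image, Finset.mem_image] at this
    rcases this with ⟨c, hc, hce⟩ | ⟨c, hc, hce⟩
    · exact Or.inl ⟨c, hc, hce.symm⟩
    · exact Or.inr ⟨c, hc, hce.symm⟩
  have C1 : ∀ a ∈ A, ∀ b ∈ A, a + b ≤ p + M → ∃ c ∈ A, a + b = p + c := by
    intro a ha b hb hle
    rcases hmemU a ha b hb with h | ⟨c, hc, hce⟩
    · exact h
    · have h1 := hple c hc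
      have : c = p := by omega
      exact ⟨M, hM, by omega⟩
  have C2 : ∀ a ∈ A, ∀ b ∈ A, p + M ≤ a + b → ∃ c ∈ A, a + b = M + c := by
    intro a ha b hb hle
    rcases hmemU a ha b hb with ⟨c, hc, hce⟩ | h
    · have h1 := hleM c hc
      have : c = M := by omega
      exact ⟨p, hp, by omega⟩
    · exact h
  -- second smallest element
  have herase : (A.erase p).Nonempty := by
    rw [← Finset.card_pos, Finset.card_erase_of_mem hp, hcard]; omega
  set q := (A.erase p).min' herase with hq_def
  have hqA : q ∈ A := Finset.mem_of_mem_erase ((A.erase p).min'_mem herase)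
  have hqp : q ≠ p := Finset.ne_of_mem_erase ((A.erase p).min'_mem herase)
  have hq_min : ∀ a ∈ A, a ≠ p → q ≤ a := by
    intro a ha hane
    exact (A.erase p).min'_le a (Finset.mem_erase.mpr ⟨hane, ha⟩)
  have hpq : p < q := lt_of_le_of_ne (hple q hqA) (Ne.symm hqp)
  set d := q - p with hd_def
  have hd1 : 1 ≤ d := by omega
  have hqpd : q = p + d := by omega
  -- Lemma B: every element reaches M by adding d's
  have keyB : ∀ m : ℕ, ∀ a ∈ A, M - a ≤ m → ∃ j, a + j * d = M := by
    intro m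
    induction m with
    | zero =>
      intro a ha hle
      have := hleM a ha
      exact ⟨0, by omega⟩
    | succ m ih =>
      intro a ha hle
      by_cases haM : a = M
      · exact ⟨0, by omega⟩
      have haM' : a < M := lt_of_le_of_ne (hleM a ha) haM
      by_cases hcase : a + q ≤ p + M
      · obtain ⟨c, hc, hce⟩ := C1 a ha q hqA hcase
        have hcad : c = a + d := by omega
        obtain ⟨j, hj⟩ := ih c hc (by omega)
        refine ⟨j + 1, ?_⟩
        have : (j + 1) * d = j * d + d := by ring
        omega
      · push_neg at hcase
        obtain ⟨c, hc, hce⟩ := C2 a ha q hqA (le_of_lt hcase)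
        have hcq : c < q := by omega
        have hcp : c = p := by
          by_contra hne
          exact absurd (hq_min c hc hne) (by omega)
        exact ⟨1, by omega⟩
  -- M = p + K * d
  obtain ⟨K, hK⟩ := keyB (M - p) p hp (le_refl _)
  -- upward closure: all p + k*d for k ≤ K are in A
  have hup : ∀ k, k ≤ K → p + k * d ∈ A := by
    intro k
    induction k with
    | zero => intro _; simpa using hp
    | succ k ih =>
      intro hk1
      have hkA := ih (by omega)
      have hmul : (k + 1) * d ≤ K * d := Nat.mul_le_mul_right d hk1
      have hmul2 : (k + 1) * d = k * d + d := by ring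
      obtain ⟨c, hc, hce⟩ := C1 (p + k * d) hkA q hqA (by omega)
      have : c = p + (k + 1) * d := by omega
      rwa [← this]
  -- A is exactly the AP
  have hAeq : A = (Finset.range (K + 1)).image (fun k => p + d * k) := by
    ext a
    simp only [Finset.mem_image, Finset.mem_range]
    constructor
    · intro ha
      obtain ⟨j, hj⟩ := keyB (M - a) a ha (le_refl _)
      have hap := hple a ha
      have hjK : j ≤ K := by
        have h1 : j * d ≤ K * d := by omega
        exact Nat.le_of_mul_le_mul_right h1 (by omega)
      refine ⟨K - j, by omega, ?_⟩
      have h2 : (K - j) * d = K * d - j * d := by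
        rw [Nat.sub_mul]
      have h3 : j * d ≤ K * d := by omega
      have h4 : d * (K - j) = (K - j) * d := by ring
      omega
    · rintro ⟨k, hk, rfl⟩
      rw [mul_comm]
      exact hup k (by omega)
  have hKn : K + 1 = n := by
    have : A.card = K + 1 := by
      rw [hAeq, Finset.card_image_of_injective, Finset.card_range]
      intro x y hxy
      simp only at hxy
      have : d * x = d * y := by omega
      exact Nat.eq_of_mul_eq_mul_left (by omega) this
    omega
  exact ⟨p, d, hd1, by rw [hAeq, hKn]⟩

theorem stmt6 (A : Finset ℕ) (n : ℕ) (hn : 2 ≤ n) (hcard : A.card = n) :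
    (∀ s : ℕ, (sumset A s).card = s * (n - 1) + 1) ↔
      ∃ q0 q1 : ℕ, 1 ≤ q1 ∧ A = (Finset.range n).image (fun k => q0 + q1 * k) := by
  constructor
  · intro h
    apply forward_ap A n hn hcard
    have h2 := h 2
    have hss : sumset A 2 = A + A := by
      rw [show sumset A 2 = A + sumset A 1 from rfl, sumset_one']
    rw [hss] at h2
    omega
  · rintro ⟨q0, q1, hq, rfl⟩ s
    rw [ap_sumset q0 q1 n hq (by omega) s]
    rw [Finset.card_image_of_injective _ ?_, Finset.card_range]
    intro x y hxy
    simp only at hxy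
    have : q1 * x = q1 * y := by omega
    exact Nat.eq_of_mul_eq_mul_left (by omega) this
end

section
/- Let A = {0, a_2, ..., a_n} with 0 < a_2 < ... < a_n, n ≥ 2, and gcd(a_2, ..., a_n) = 1. Let Γ_1 be the numerical semigroup generated by a_2, ..., a_n and Γ_2 the numerical semigroup generated by a_n - a_{n-1}, ..., a_n - a_2, a_n. Then for all sufficiently large s, |sA| = s·a_n + 1 - δ_1 - δ_2, where δ_i = |ℕ \ Γ_i| is the number of gaps of Γ_i. -/
open Finset Pointwise

/-!
The reflection `a ↦ aₙ - a` sends `x ∈ s • A` to `s * aₙ - x ∈ s • A'`, `A' = aₙ - A`, so every such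
`x` has `x ∈ Γ₁` and `s * aₙ - x ∈ Γ₂`. Conversely, for large `s`, let `x ≤ s * aₙ` satisfy both
conditions. If `s * aₙ - x` is small, it is a sum of at most `s` elements of `A'`, and reflecting
back puts `x` in `s • A`. Otherwise subtract copies of `aₙ` from `x` until it falls below the
conductor of `Γ₁` plus `aₙ`; what is left is a sum of boundedly many elements of `A`, and there is
room for the copies of `aₙ`. So `s • A` is `[0, s * aₙ]` minus the gaps of `Γ₁` and the reflected
gaps of `Γ₂`, two disjoint sets once `s * aₙ` exceeds the sum of the conductors.
-/

lemma sumset_eq_nsmul (A : Finset ℕ) : ∀ s, sumset A s = s • A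
  | 0 => by rw [sumset, zero_nsmul, singleton_zero]
  | s + 1 => by rw [sumset, sumset_eq_nsmul A s, succ_nsmul']

section Reflection

variable {A : Finset ℕ} {m : ℕ}

lemma le_mul_of_mem_nsmul (hA : ∀ a ∈ A, a ≤ m) : ∀ {s x : ℕ}, x ∈ s • A → x ≤ s * m
  | 0, x, hx => by simp_all
  | s + 1, _, hx => by
    obtain ⟨a, ha, b, hb, rfl⟩ := mem_add.1 (succ_nsmul' A s ▸ hx)
    have := le_mul_of_mem_nsmul hA hb
    have := hA a ha
    rw [Nat.succ_mul]
    omega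

lemma sub_mem_nsmul_image_sub (hA : ∀ a ∈ A, a ≤ m) :
    ∀ {s x : ℕ}, x ∈ s • A → s * m - x ∈ s • A.image (m - ·)
  | 0, x, hx => by simp_all
  | s + 1, _, hx => by
    obtain ⟨a, ha, b, hb, rfl⟩ := mem_add.1 (succ_nsmul' A s ▸ hx)
    have := le_mul_of_mem_nsmul hA hb
    have := hA a ha
    rw [show (s + 1) * m - (a + b) = (m - a) + (s * m - b) by rw [Nat.succ_mul]; omega,
      succ_nsmul']
    exact add_mem_add (mem_image_of_mem _ ha) (sub_mem_nsmul_image_sub hA hb)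

lemma image_sub_image_sub (hA : ∀ a ∈ A, a ≤ m) : (A.image (m - ·)).image (m - ·) = A := by
  rw [image_image]
  exact (image_congr fun a ha => Nat.sub_sub_self (hA a ha)).trans image_id

lemma gcd_image_sub_eq_one (h0 : 0 ∈ A) (hA : ∀ a ∈ A, a ≤ m) (hgcd : A.gcd id = 1) :
    (A.image (m - ·)).gcd id = 1 := by
  set d := (A.image (m - ·)).gcd id
  have hd : ∀ a ∈ A, d ∣ m - a := fun a ha => Finset.gcd_dvd (f := id) (mem_image_of_mem _ ha)
  refine Nat.dvd_one.1 (hgcd ▸ Finset.dvd_gcd fun a ha => ?_)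
  rw [← Nat.sub_sub_self (hA a ha)]
  exact Nat.dvd_sub (by simpa using hd 0 h0) (hd a ha)

end Reflection

section Closure

variable {A : Finset ℕ}

lemma mem_closure_of_mem_nsmul {s x : ℕ} (hx : x ∈ s • A) :
    x ∈ AddSubmonoid.closure (A : Set ℕ) :=
  AddSubmonoid.nsmul_subset AddSubmonoid.subset_closure (coe_nsmul A s ▸ mem_coe.2 hx)

lemma mem_nsmul_self_of_mem_closure (h0 : 0 ∈ A) {x : ℕ}
    (hx : x ∈ AddSubmonoid.closure (A : Set ℕ)) : x ∈ x • A := by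
  induction hx using AddSubmonoid.closure_induction with
  | mem a ha =>
    rcases eq_or_ne a 0 with rfl | ha0
    · simp
    · exact subset_nsmul h0 ha0 ha
  | zero => simp
  | add x y _ _ hx hy => exact add_nsmul A x y ▸ add_mem_add hx hy

lemma exists_forall_ge_mem_closure (hgcd : A.gcd id = 1) :
    ∃ N, ∀ n ≥ N, n ∈ AddSubmonoid.closure (A : Set ℕ) := by
  obtain ⟨N, hN⟩ := Nat.exists_mem_closure_of_ge (A : Set ℕ)
  have hset : Nat.setGcd (A : Set ℕ) = 1 :=
    Nat.dvd_one.1 (hgcd ▸ Finset.dvd_gcd fun a ha => Nat.setGcd_dvd_of_mem ha)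
  exact ⟨N, fun n hn => hN n hn (hset ▸ one_dvd n)⟩

lemma exists_mul_le_and_mem_nsmul (h0 : 0 ∈ A) {m N : ℕ} (hm : m ∈ A) (hm0 : 0 < m)
    (hN : ∀ n ≥ N, n ∈ AddSubmonoid.closure (A : Set ℕ)) {x : ℕ}
    (hx : x ∈ AddSubmonoid.closure (A : Set ℕ)) : ∃ j, j * m ≤ x ∧ x ∈ (j + (N + m)) • A := by
  induction x using Nat.strong_induction_on with
  | _ x ih =>
    by_cases hsmall : x < N + m
    · exact ⟨0, by simp, by
        simpa using nsmul_subset_nsmul_right h0 hsmall.le (mem_nsmul_self_of_mem_closure h0 hx)⟩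
    · obtain ⟨j, hj, hxj⟩ := ih (x - m) (by omega) (hN _ (by omega))
      refine ⟨j + 1, by rw [add_one_mul]; omega, ?_⟩
      rw [show j + 1 + (N + m) = 1 + (j + (N + m)) by ring, add_nsmul, one_nsmul,
        show x = m + (x - m) by omega]
      exact add_mem_add hm hxj

end Closure

lemma mem_nsmul_iff_mem_closure {A : Finset ℕ} {m N s x : ℕ} (h0 : 0 ∈ A) (hm : m ∈ A)
    (hA : ∀ a ∈ A, a ≤ m) (hm0 : 0 < m) (hN : ∀ n ≥ N, n ∈ AddSubmonoid.closure (A : Set ℕ))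
    (hs : (N + m) * m ≤ s) :
    x ∈ s • A ↔ x ≤ s * m ∧ x ∈ AddSubmonoid.closure (A : Set ℕ) ∧
      s * m - x ∈ AddSubmonoid.closure ((A.image (m - ·) : Finset ℕ) : Set ℕ) := by
  refine ⟨fun hx => ⟨le_mul_of_mem_nsmul hA hx, mem_closure_of_mem_nsmul hx,
    mem_closure_of_mem_nsmul (sub_mem_nsmul_image_sub hA hx)⟩, fun ⟨hxs, hx, hy⟩ => ?_⟩
  by_cases hsmall : s * m - x < (N + m) * m
  · have h0' : 0 ∈ A.image (m - ·) := mem_image.2 ⟨m, hm, Nat.sub_self m⟩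
    have hy' : s * m - x ∈ s • A.image (m - ·) := nsmul_subset_nsmul_right h0' (by omega)
      (mem_nsmul_self_of_mem_closure h0' hy)
    have := sub_mem_nsmul_image_sub (m := m) (by simp) hy'
    rwa [image_sub_image_sub hA, Nat.sub_sub_self hxs] at this
  · obtain ⟨j, hj, hxj⟩ := exists_mul_le_and_mem_nsmul h0 hm hm0 hN hx
    have hjs : (j + (N + m)) * m ≤ s * m := by rw [add_mul]; omega
    exact nsmul_subset_nsmul_right h0 (Nat.le_of_mul_le_mul_right hjs hm0) hxj

lemma ncard_compl_eq_card_filter {S : Set ℕ} [DecidablePred (· ∈ S)] {N M : ℕ}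
    (hS : ∀ n ≥ N, n ∈ S) (hNM : N ≤ M + 1) :
    Sᶜ.ncard = ((range (M + 1)).filter (· ∉ S)).card := by
  rw [← Set.ncard_coe_finset]
  congr 1
  ext x
  simp only [coe_filter, mem_range, Set.mem_compl_iff, Set.mem_ofPred_eq]
  exact ⟨fun hx => ⟨by by_contra; exact hx (hS x (by omega)), hx⟩, And.right⟩

lemma card_add_ncard_compl_add_ncard_compl {S T : Set ℕ} {N₁ N₂ M : ℕ} (F : Finset ℕ)
    (hF : ∀ x, x ∈ F ↔ x ≤ M ∧ x ∈ S ∧ M - x ∈ T)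
    (hS : ∀ n ≥ N₁, n ∈ S) (hT : ∀ n ≥ N₂, n ∈ T) (hM : N₁ + N₂ ≤ M) :
    F.card + Sᶜ.ncard + Tᶜ.ncard = M + 1 := by
  classical
  set R := range (M + 1)
  have hFR : F = R.filter (fun x => x ∈ S ∧ M - x ∈ T) := by
    ext x
    simp [R, hF]
  have hTR : (R.filter (· ∉ T)).card = (R.filter (fun x => M - x ∉ T)).card := by
    refine card_nbij' (M - ·) (M - ·) ?_ ?_ ?_ ?_ <;> intro x <;> simp [R]
    all_goals intro hx; simp [Nat.sub_sub_self hx]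
  have hdisj : Disjoint (R.filter (· ∉ S)) (R.filter (fun x => M - x ∉ T)) :=
    disjoint_filter.2 fun x _ hxS hxT => hxT (hT _ (by
      by_contra
      exact hxS (hS x (by omega))))
  rw [hFR, ncard_compl_eq_card_filter (M := M) hS (by omega),
    ncard_compl_eq_card_filter (M := M) hT (by omega),
    hTR, add_assoc, ← card_union_of_disjoint hdisj, ← filter_or, ← card_range (M + 1)]
  simp_rw [← not_and_or]
  exact card_filter_add_card_filter_not _

lemma pos_of_forall_le_of_gcd_eq_one {A : Finset ℕ} {m : ℕ} (hA : ∀ a ∈ A, a ≤ m)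
    (hgcd : A.gcd id = 1) : 0 < m :=
  Nat.pos_of_ne_zero fun hm => by
    have : A.gcd id = 0 := Finset.gcd_eq_zero_iff.2 fun a ha => by simpa [hm] using hA a ha
    omega

lemma closure_erase_zero (A : Finset ℕ) :
    AddSubmonoid.closure ((A.erase 0 : Finset ℕ) : Set ℕ) = AddSubmonoid.closure (A : Set ℕ) := by
  rw [coe_erase, ← AddSubmonoid.closure_insert_zero, Set.insert_sdiff_singleton,
    AddSubmonoid.closure_insert_zero]

theorem stmt7_general (A : Finset ℕ) (h0 : 0 ∈ A) (hgcd : A.gcd id = 1)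
    (an : ℕ) (han : an = A.max' ⟨0, h0⟩)
    (Γ1 Γ2 : AddSubmonoid ℕ)
    (hΓ1 : Γ1 = AddSubmonoid.closure ((A.erase 0 : Finset ℕ) : Set ℕ))
    (hΓ2 : Γ2 = AddSubmonoid.closure ((A.image (fun a => an - a) : Finset ℕ) : Set ℕ))
    (δ1 δ2 : ℕ)
    (hδ1 : δ1 = (Set.univ \ (Γ1 : Set ℕ)).ncard)
    (hδ2 : δ2 = (Set.univ \ (Γ2 : Set ℕ)).ncard) :
    ∃ s0 : ℕ, ∀ s ≥ s0, (sumset A s).card + δ1 + δ2 = s * an + 1 := by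
  subst hΓ1 hΓ2 hδ1 hδ2
  have hanA : an ∈ A := han ▸ A.max'_mem _
  have hA : ∀ a ∈ A, a ≤ an := fun a ha => han ▸ A.le_max' a ha
  have han0 : 0 < an := pos_of_forall_le_of_gcd_eq_one hA hgcd
  obtain ⟨N₁, hN₁⟩ := exists_forall_ge_mem_closure hgcd
  obtain ⟨N₂, hN₂⟩ := exists_forall_ge_mem_closure (gcd_image_sub_eq_one h0 hA hgcd)
  refine ⟨(N₁ + an) * an + N₁ + N₂, fun s hs => ?_⟩
  rw [sumset_eq_nsmul, closure_erase_zero, ← Set.compl_eq_univ_sdiff, ← Set.compl_eq_univ_sdiff]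
  exact card_add_ncard_compl_add_ncard_compl _
    (fun x => mem_nsmul_iff_mem_closure h0 hanA hA han0 hN₁ (by omega)) hN₁ hN₂ (by nlinarith)

theorem stmt7 (A : Finset ℕ) (h0 : 0 ∈ A) (hn : 2 ≤ A.card) (hgcd : A.gcd id = 1)
    (an : ℕ) (han : an = A.max' ⟨0, h0⟩)
    (Γ1 Γ2 : AddSubmonoid ℕ)
    (hΓ1 : Γ1 = AddSubmonoid.closure ((A.erase 0 : Finset ℕ) : Set ℕ))
    (hΓ2 : Γ2 = AddSubmonoid.closure ((A.image (fun a => an - a) : Finset ℕ) : Set ℕ))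
    (δ1 δ2 : ℕ)
    (hδ1 : δ1 = (Set.univ \ (Γ1 : Set ℕ)).ncard)
    (hδ2 : δ2 = (Set.univ \ (Γ2 : Set ℕ)).ncard) :
    ∃ s0 : ℕ, ∀ s ≥ s0, (sumset A s).card + δ1 + δ2 = s * an + 1 :=
  stmt7_general A h0 hgcd an han Γ1 Γ2 hΓ1 hΓ2 δ1 δ2 hδ1 hδ2
end

section
/- Let A = {0, a_2, ..., a_n} with 0 < a_2 < ... < a_n and gcd(a_2, ..., a_n) = 1, and suppose sA = C_1 ⊔ [c_1, s·a_n - c_2] ⊔ (s·a_n - C_2) for all s ≥ σ, with C_1 ⊆ [0, c_1-2], C_2 ⊆ [0, c_2-2]. Then c_1 is the conductor of the numerical semigroup Γ_1 = ⟨a_2, ..., a_n⟩ and C_1 = Γ_1 ∩ [0, c_1 - 2]. -/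
open Finset Pointwise

/-!
Since `0 ∈ A`, the sumsets `sA` increase with `s` and exhaust `Γ₁ = ⟨A \ {0}⟩`. For a fixed `m` and
`s` large, the right end `s·aₙ - c₂` of the interval and the reflected block `s·aₙ - C₂` lie beyond
`m`, so `m ∈ Γ₁` iff `m ∈ C₁` or `c₁ ≤ m`. Thus `Γ₁ = C₁ ∪ [c₁, ∞)`, and `c₁ - 1 ∉ Γ₁` because
`C₁ ⊆ [0, c₁ - 2]`.
-/

open Filter

namespace sumset

variable {A : Finset ℕ}

lemma monotone (h0 : 0 ∈ A) : Monotone (sumset A) :=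
  monotone_nat_of_le_succ fun _ _ hx => by simpa [sumset] using Finset.add_mem_add h0 hx

lemma add_mem_add {x y s t : ℕ} (hx : x ∈ sumset A s) (hy : y ∈ sumset A t) :
    x + y ∈ sumset A (s + t) := by
  induction s generalizing x with
  | zero =>
    obtain rfl := mem_singleton.1 hx
    simpa using hy
  | succ s ih =>
    obtain ⟨a, ha, z, hz, rfl⟩ := mem_add.1 hx
    rw [Nat.succ_add, sumset, add_assoc]
    exact Finset.add_mem_add ha (ih hz)

lemma mem_closure_of_mem {x s : ℕ} (hx : x ∈ sumset A s) :
    x ∈ AddSubmonoid.closure (↑(A.erase 0) : Set ℕ) := by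
  induction s generalizing x with
  | zero => simp_all [sumset]
  | succ s ih =>
    obtain ⟨a, ha, z, hz, rfl⟩ := mem_add.1 hx
    refine add_mem ?_ (ih hz)
    rcases eq_or_ne a 0 with rfl | ha0
    · exact zero_mem _
    · exact AddSubmonoid.subset_closure (mem_erase.2 ⟨ha0, ha⟩)

lemma exists_mem_of_mem_closure {x : ℕ} (hx : x ∈ AddSubmonoid.closure (↑(A.erase 0) : Set ℕ)) :
    ∃ s, x ∈ sumset A s := by
  induction hx using AddSubmonoid.closure_induction with
  | mem a ha =>
    exact ⟨1, by simpa [sumset] using Finset.add_mem_add (mem_erase.1 ha).2 (mem_singleton_self 0)⟩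
  | zero => exact ⟨0, mem_singleton_self 0⟩
  | add _ _ _ _ hx hy =>
    obtain ⟨s, hs⟩ := hx
    obtain ⟨t, ht⟩ := hy
    exact ⟨s + t, add_mem_add hs ht⟩

lemma mem_closure_iff_eventually_mem (h0 : 0 ∈ A) {x : ℕ} :
    x ∈ AddSubmonoid.closure (↑(A.erase 0) : Set ℕ) ↔ ∀ᶠ s in atTop, x ∈ sumset A s :=
  ⟨fun hx =>
    let ⟨s, hs⟩ := exists_mem_of_mem_closure hx
    eventually_atTop.2 ⟨s, fun _ ht => monotone h0 ht hs⟩,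
   fun hx => let ⟨_, hs⟩ := hx.exists; mem_closure_of_mem hs⟩

end sumset

lemma mem_union_Icc_union_image_sub_iff {C₁ C₂ : Finset ℕ} {c₁ c₂ N m : ℕ}
    (hC₂ : ∀ c ∈ C₂, c < c₂) (hm : m + c₂ ≤ N) :
    m ∈ C₁ ∪ Icc c₁ (N - c₂) ∪ C₂.image (fun c => N - c) ↔ m ∈ C₁ ∨ c₁ ≤ m := by
  simp only [mem_union, mem_Icc, mem_image]
  constructor
  · rintro ((hm₁ | ⟨hm₁, -⟩) | ⟨c, hc, rfl⟩)
    · exact Or.inl hm₁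
    · exact Or.inr hm₁
    · have := hC₂ c hc
      omega
  · rintro (hm₁ | hm₁)
    · exact Or.inl (Or.inl hm₁)
    · exact Or.inl (Or.inr ⟨hm₁, by omega⟩)

lemma mem_closure_iff_of_sumset_eq {A C₁ C₂ : Finset ℕ} {σ c₁ c₂ n : ℕ} (h0 : 0 ∈ A) (hn : 0 < n)
    (hC₂ : ∀ c ∈ C₂, c < c₂)
    (hdec : ∀ s ≥ σ, sumset A s = C₁ ∪ Icc c₁ (s * n - c₂) ∪ C₂.image (fun c => s * n - c))
    (m : ℕ) : m ∈ AddSubmonoid.closure (↑(A.erase 0) : Set ℕ) ↔ m ∈ C₁ ∨ c₁ ≤ m := by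
  rw [sumset.mem_closure_iff_eventually_mem h0,
    ← eventually_const (f := (atTop : Filter ℕ)) (p := m ∈ C₁ ∨ c₁ ≤ m)]
  refine eventually_congr ?_
  filter_upwards [eventually_ge_atTop σ, eventually_ge_atTop (m + c₂)] with s hσ hs
  rw [hdec s hσ]
  exact mem_union_Icc_union_image_sub_iff hC₂ (hs.trans (Nat.le_mul_of_pos_right s hn))

theorem stmt9_general (A : Finset ℕ) (h0 : 0 ∈ A) (hn : 2 ≤ A.card)
    (an : ℕ) (han : an = A.max' ⟨0, h0⟩)
    (σ c1 c2 : ℕ) (C1 C2 : Finset ℕ)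
    (hC1 : ∀ x ∈ C1, x + 2 ≤ c1) (hC2 : ∀ x ∈ C2, x + 2 ≤ c2)
    (hdec : ∀ s ≥ σ,
      sumset A s = C1 ∪ Finset.Icc c1 (s * an - c2) ∪ C2.image (fun c => s * an - c) ∧
      Disjoint C1 (Finset.Icc c1 (s * an - c2)) ∧
      Disjoint C1 (C2.image (fun c => s * an - c)) ∧
      Disjoint (Finset.Icc c1 (s * an - c2)) (C2.image (fun c => s * an - c)))
    (Γ1 : AddSubmonoid ℕ)
    (hΓ1 : Γ1 = AddSubmonoid.closure ((A.erase 0 : Finset ℕ) : Set ℕ)) :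
    (∀ m : ℕ, c1 ≤ m → m ∈ Γ1) ∧
    (∀ c : ℕ, (∀ m : ℕ, c ≤ m → m ∈ Γ1) → c1 ≤ c) ∧
    (∀ x : ℕ, x ∈ C1 ↔ x ∈ Γ1 ∧ x + 2 ≤ c1) := by
  have han_pos : 0 < an := han ▸ (Nat.zero_le _).trans_lt (min'_lt_max'_of_card A hn)
  have hmem (m : ℕ) : m ∈ Γ1 ↔ m ∈ C1 ∨ c1 ≤ m := hΓ1 ▸
    mem_closure_iff_of_sumset_eq h0 han_pos (fun c hc => by have := hC2 c hc; omega)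
      (fun s hs => (hdec s hs).1) m
  refine ⟨fun m hm => (hmem m).2 (Or.inr hm), fun c hc => ?_, fun x => ?_⟩
  · by_contra! hlt
    rcases (hmem (c1 - 1)).1 (hc _ (by omega)) with h | h
    · have := hC1 _ h
      omega
    · omega
  · rw [hmem]
    refine ⟨fun hx => ⟨Or.inl hx, hC1 x hx⟩, ?_⟩
    rintro ⟨hx | hx, hle⟩
    · exact hx
    · omega

theorem stmt9 (A : Finset ℕ) (h0 : 0 ∈ A) (hn : 2 ≤ A.card) (hgcd : A.gcd id = 1)
    (an : ℕ) (han : an = A.max' ⟨0, h0⟩)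
    (σ c1 c2 : ℕ) (C1 C2 : Finset ℕ)
    (hC1 : ∀ x ∈ C1, x + 2 ≤ c1) (hC2 : ∀ x ∈ C2, x + 2 ≤ c2)
    (hdec : ∀ s ≥ σ,
      sumset A s = C1 ∪ Finset.Icc c1 (s * an - c2) ∪ C2.image (fun c => s * an - c) ∧
      Disjoint C1 (Finset.Icc c1 (s * an - c2)) ∧
      Disjoint C1 (C2.image (fun c => s * an - c)) ∧
      Disjoint (Finset.Icc c1 (s * an - c2)) (C2.image (fun c => s * an - c)))
    (Γ1 : AddSubmonoid ℕ)
    (hΓ1 : Γ1 = AddSubmonoid.closure ((A.erase 0 : Finset ℕ) : Set ℕ)) :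
    (∀ m : ℕ, c1 ≤ m → m ∈ Γ1) ∧
    (∀ c : ℕ, (∀ m : ℕ, c ≤ m → m ∈ Γ1) → c1 ≤ c) ∧
    (∀ x : ℕ, x ∈ C1 ↔ x ∈ Γ1 ∧ x + 2 ≤ c1) :=
  stmt9_general A h0 hn an han σ c1 c2 C1 C2 hC1 hC2 hdec Γ1 hΓ1
end

section
/- Let A = {0, a_2, ..., a_n} with 0 < a_2 < ... < a_n and gcd(a_2, ..., a_n) = 1, and suppose sA = C_1 ⊔ [c_1, s·a_n - c_2] ⊔ (s·a_n - C_2) for all s ≥ σ. Then c_2 is the conductor of the numerical semigroup Γ_2 = ⟨a_n - a_{n-1}, ..., a_n - a_2, a_n⟩ and C_2 = Γ_2 ∩ [0, c_2 - 2]. -/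
/-!
Reflecting `x ↦ s * aₙ - x` carries `sA` onto the `s`-fold sumset of `B = aₙ - A`, and since
`0 ∈ B` these sumsets increase with `s` and exhaust `Γ₂`. For `s` large compared to `x`, the
reflected decomposition of `sA` says that `x ∈ sB` exactly when `c₂ ≤ x` or `x ∈ C₂`. Hence
`Γ₂ = C₂ ⊔ [c₂, ∞)`, and as `C₂ ⊆ [0, c₂ - 2]`, the gap `c₂ - 1` shows `c₂` is the conductor.
-/

open Finset Pointwise

lemma sumset_add (A : Finset ℕ) (s t : ℕ) : sumset A (s + t) = sumset A s + sumset A t := by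
  induction s with
  | zero => simp [sumset, singleton_zero]
  | succ s ih => rw [Nat.add_right_comm, sumset, ih, sumset, add_assoc]

lemma zero_mem_sumset {A : Finset ℕ} (h0 : 0 ∈ A) (s : ℕ) : 0 ∈ sumset A s := by
  induction s with
  | zero => simp [sumset]
  | succ s ih => exact mem_add.mpr ⟨0, h0, 0, ih, rfl⟩

lemma sumset_mono {A : Finset ℕ} (h0 : 0 ∈ A) {s t : ℕ} (h : s ≤ t) : sumset A s ⊆ sumset A t := by
  obtain ⟨k, rfl⟩ := Nat.exists_eq_add_of_le h
  rw [sumset_add]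
  exact fun x hx => mem_add.mpr ⟨x, hx, 0, zero_mem_sumset h0 k, add_zero x⟩

lemma le_mul_of_mem_sumset {A : Finset ℕ} {N : ℕ} (hA : ∀ a ∈ A, a ≤ N) (s : ℕ) :
    ∀ x ∈ sumset A s, x ≤ s * N := by
  induction s with
  | zero => simp [sumset]
  | succ s ih =>
    rintro _ hx
    obtain ⟨a, ha, y, hy, rfl⟩ := mem_add.mp hx
    have := hA a ha
    have := ih y hy
    rw [Nat.succ_mul]
    omega

lemma sumset_image_tsub {A : Finset ℕ} {N : ℕ} (hA : ∀ a ∈ A, a ≤ N) (s : ℕ) :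
    sumset (A.image (N - ·)) s = (sumset A s).image (s * N - ·) := by
  induction s with
  | zero => simp [sumset]
  | succ s ih =>
    rw [sumset, sumset, ih]
    ext y
    simp only [mem_add, mem_image, Nat.succ_mul]
    constructor
    · rintro ⟨_, ⟨a, ha, rfl⟩, _, ⟨x, hx, rfl⟩, rfl⟩
      have := hA a ha
      have := le_mul_of_mem_sumset hA s x hx
      exact ⟨a + x, ⟨a, ha, x, hx, rfl⟩, by omega⟩
    · rintro ⟨_, ⟨a, ha, x, hx, rfl⟩, rfl⟩
      have := hA a ha
      have := le_mul_of_mem_sumset hA s x hx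
      exact ⟨N - a, ⟨a, ha, rfl⟩, s * N - x, ⟨x, hx, rfl⟩, by omega⟩

lemma mem_closure_iff_exists_mem_sumset (A : Finset ℕ) (x : ℕ) :
    x ∈ AddSubmonoid.closure (A : Set ℕ) ↔ ∃ s, x ∈ sumset A s := by
  constructor
  · intro hx
    induction hx using AddSubmonoid.closure_induction with
    | mem a ha => exact ⟨1, mem_add.mpr ⟨a, ha, 0, by simp [sumset], add_zero a⟩⟩
    | zero => exact ⟨0, by simp [sumset]⟩
    | add x y _ _ hx hy =>
      obtain ⟨s, hs⟩ := hx
      obtain ⟨t, ht⟩ := hy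
      exact ⟨s + t, by rw [sumset_add]; exact mem_add.mpr ⟨x, hs, y, ht, rfl⟩⟩
  · rintro ⟨s, hs⟩
    induction s generalizing x with
    | zero => simp only [sumset, mem_singleton] at hs; exact hs ▸ AddSubmonoid.zero_mem _
    | succ s ih =>
      obtain ⟨a, ha, y, hy, rfl⟩ := mem_add.mp hs
      exact add_mem (AddSubmonoid.subset_closure ha) (ih y hy)

lemma mem_closure_iff_eventually_mem_sumset {A : Finset ℕ} (h0 : 0 ∈ A) (x : ℕ) :
    x ∈ AddSubmonoid.closure (A : Set ℕ) ↔ ∀ᶠ s in Filter.atTop, x ∈ sumset A s := by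
  rw [mem_closure_iff_exists_mem_sumset]
  refine ⟨fun ⟨s, hs⟩ => Filter.eventually_atTop.2 ⟨s, fun t ht => sumset_mono h0 ht hs⟩,
    fun h => h.exists⟩

lemma mem_image_tsub_iff {S : Finset ℕ} {N x : ℕ} (hS : ∀ y ∈ S, y ≤ N) (hx : x ≤ N) :
    x ∈ S.image (N - ·) ↔ N - x ∈ S := by
  constructor
  · intro h
    obtain ⟨y, hy, rfl⟩ := mem_image.mp h
    rwa [Nat.sub_sub_self (hS y hy)]
  · exact fun h => mem_image.mpr ⟨N - x, h, Nat.sub_sub_self hx⟩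

lemma tsub_mem_decomposition_iff {C1 C2 : Finset ℕ} {c1 c2 N x : ℕ}
    (hC1 : ∀ y ∈ C1, y + 2 ≤ c1) (hC2 : ∀ y ∈ C2, y + 2 ≤ c2) (hx : x + c1 + c2 ≤ N) :
    N - x ∈ C1 ∪ Icc c1 (N - c2) ∪ C2.image (N - ·) ↔ c2 ≤ x ∨ x ∈ C2 := by
  have hC2N : ∀ y ∈ C2, y ≤ N := fun y hy => by have := hC2 y hy; omega
  rw [mem_union, mem_union, mem_Icc, mem_image_tsub_iff hC2N (Nat.sub_le N x),
    Nat.sub_sub_self (by omega : x ≤ N)]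
  have : N - x ∉ C1 := fun h => by have := hC1 _ h; omega
  simp only [this, false_or]
  exact or_congr_left (by omega)

theorem stmt10_general (A : Finset ℕ) (h0 : 0 ∈ A) (hn : 2 ≤ A.card)
    (an : ℕ) (han : an = A.max' ⟨0, h0⟩)
    (σ c1 c2 : ℕ) (C1 C2 : Finset ℕ)
    (hC1 : ∀ x ∈ C1, x + 2 ≤ c1) (hC2 : ∀ x ∈ C2, x + 2 ≤ c2)
    (hdec : ∀ s ≥ σ,
      sumset A s = C1 ∪ Finset.Icc c1 (s * an - c2) ∪ C2.image (fun c => s * an - c) ∧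
      Disjoint C1 (Finset.Icc c1 (s * an - c2)) ∧
      Disjoint C1 (C2.image (fun c => s * an - c)) ∧
      Disjoint (Finset.Icc c1 (s * an - c2)) (C2.image (fun c => s * an - c)))
    (Γ2 : AddSubmonoid ℕ)
    (hΓ2 : Γ2 = AddSubmonoid.closure ((A.image (fun a => an - a) : Finset ℕ) : Set ℕ)) :
    (∀ m : ℕ, c2 ≤ m → m ∈ Γ2) ∧
    (∀ c : ℕ, (∀ m : ℕ, c ≤ m → m ∈ Γ2) → c2 ≤ c) ∧
    (∀ x : ℕ, x ∈ C2 ↔ x ∈ Γ2 ∧ x + 2 ≤ c2) := by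
  have hAle : ∀ a ∈ A, a ≤ an := fun a ha => han ▸ A.le_max' a ha
  have han_pos : 0 < an := by
    obtain ⟨a, ha, ha0⟩ := exists_mem_ne hn 0
    exact Nat.pos_of_ne_zero ha0 |>.trans_le (hAle a ha)
  have h0B : 0 ∈ A.image (an - ·) := mem_image.mpr ⟨an, han ▸ A.max'_mem _, Nat.sub_self an⟩
  have hΓ2_mem : ∀ x, x ∈ Γ2 ↔ c2 ≤ x ∨ x ∈ C2 := by
    intro x
    have hlarge : ∀ᶠ s in Filter.atTop,
        (x ∈ sumset (A.image (an - ·)) s ↔ c2 ≤ x ∨ x ∈ C2) := by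
      filter_upwards [Filter.eventually_ge_atTop σ, Filter.eventually_ge_atTop (x + c1 + c2)]
        with s hσ hs
      have hsan : x + c1 + c2 ≤ s * an := hs.trans (Nat.le_mul_of_pos_right s han_pos)
      rw [sumset_image_tsub hAle, mem_image_tsub_iff (le_mul_of_mem_sumset hAle s) (by omega),
        (hdec s hσ).1]
      exact tsub_mem_decomposition_iff hC1 hC2 hsan
    rw [hΓ2, mem_closure_iff_eventually_mem_sumset h0B, Filter.eventually_congr hlarge,
      Filter.eventually_const]
  refine ⟨fun m hm => (hΓ2_mem m).2 (Or.inl hm), fun c hc => ?_, fun x => ?_⟩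
  · by_contra! hlt
    rcases (hΓ2_mem (c2 - 1)).1 (hc _ (by omega)) with h | h
    · omega
    · have := hC2 _ h; omega
  · rw [hΓ2_mem]
    refine ⟨fun hx => ⟨Or.inr hx, hC2 x hx⟩, ?_⟩
    rintro ⟨h | h, hx⟩
    · omega
    · exact h

theorem stmt10 (A : Finset ℕ) (h0 : 0 ∈ A) (hn : 2 ≤ A.card) (hgcd : A.gcd id = 1)
    (an : ℕ) (han : an = A.max' ⟨0, h0⟩)
    (σ c1 c2 : ℕ) (C1 C2 : Finset ℕ)
    (hC1 : ∀ x ∈ C1, x + 2 ≤ c1) (hC2 : ∀ x ∈ C2, x + 2 ≤ c2)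
    (hdec : ∀ s ≥ σ,
      sumset A s = C1 ∪ Finset.Icc c1 (s * an - c2) ∪ C2.image (fun c => s * an - c) ∧
      Disjoint C1 (Finset.Icc c1 (s * an - c2)) ∧
      Disjoint C1 (C2.image (fun c => s * an - c)) ∧
      Disjoint (Finset.Icc c1 (s * an - c2)) (C2.image (fun c => s * an - c)))
    (Γ2 : AddSubmonoid ℕ)
    (hΓ2 : Γ2 = AddSubmonoid.closure ((A.image (fun a => an - a) : Finset ℕ) : Set ℕ)) :
    (∀ m : ℕ, c2 ≤ m → m ∈ Γ2) ∧
    (∀ c : ℕ, (∀ m : ℕ, c ≤ m → m ∈ Γ2) → c2 ≤ c) ∧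
    (∀ x : ℕ, x ∈ C2 ↔ x ∈ Γ2 ∧ x + 2 ≤ c2) :=
  stmt10_general A h0 hn an han σ c1 c2 C1 C2 hC1 hC2 hdec Γ2 hΓ2
end
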